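/- arXiv:0903.5418 — 3 statements merged into one kernel-verified Lean document; each statement's English description precedes it below -/
import Mathlib

section
/- Let G be a group in which any two squares commute, i.e. a²·b² = b²·a² for all a, b ∈ G. Then (x·y)² · x⁻² · y⁻² = ⁅x⁻¹, y⁆ for all x, y ∈ G. -/
open scoped commutatorElement

/-- In a group in which any two squares commute,
`(x·y)² · x⁻² · y⁻² = ⁅x⁻¹, y⁆` holds for all `x, y`. -/
theorem stmt_9 {G : Type*} [Group G] (h : ∀ a b : G, a ^ 2 * b ^ 2 = b ^ 2 * a ^ 2) :
    ∀ x y : G, (x * y) ^ 2 * x⁻¹ ^ 2 * y⁻¹ ^ 2 = ⁅x⁻¹, y⁆ := by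
  intro x y
  calc (x * y) ^ 2 * x⁻¹ ^ 2 * y⁻¹ ^ 2 = x⁻¹ ^ 2 * (x * y) ^ 2 * y⁻¹ ^ 2 := by
        rw [h (x * y) x⁻¹]
    _ = ⁅x⁻¹, y⁆ := by simp only [sq, commutatorElement_def, mul_assoc, inv_mul_cancel_left, mul_inv_cancel_left, inv_inv]
end

section
/- Let p be a prime and G a group such that the commutator subgroup G' has order p, the subgroup G'·G^(p) is contained in the centre Z(G), and the index of Z(G) in G is finite. Then [G : Z(G)] = p^(2r) for some natural number r ≥ 1. -/
/-!
Since `G' ≤ Z(G)`, the commutator `⁅x, y⁆` is multiplicative in each variable and depends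
only on the classes of `x` and `y` modulo `Z(G)`. Composed with an isomorphism `G' ≃ ℤ/p`, it
becomes an alternating pairing on `V = G/Z(G)`, nondegenerate by the very definition of the
centre. As `x^p ∈ Z(G)`, `V` is a finite `𝔽_p`-vector space, and a space carrying a
nondegenerate alternating form has even dimension: split off the hyperbolic plane spanned by
`x, y` with `B x y ≠ 0` and induct on its orthogonal complement. Hence `[G : Z(G)] = p^(2r)`,
and `r ≠ 0` because `G' ≠ 1` means `G` is not abelian.
-/

open Module (finrank)
open Submodule
open LinearMap (BilinForm)

namespace LinearMap.BilinForm

variable {K V : Type*} [Field K] [AddCommGroup V] [Module K V] {B : BilinForm K V}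

lemma IsAlt.eq_zero_of_apply_smul_add_smul_eq_zero (hB : B.IsAlt) {x y : V} (hxy : B x y ≠ 0)
    {s t : K} (hx : B x (s • x + t • y) = 0) (hy : B y (s • x + t • y) = 0) :
    s = 0 ∧ t = 0 := by
  have hyx : B y x = -B x y := (hB.neg_eq x y).symm
  simp only [map_add, map_smul, smul_eq_mul, hB.self_eq_zero, hyx] at hx hy
  constructor
  · simpa [hxy] using hy
  · simpa [hxy] using hx

lemma IsAlt.linearIndependent_pair (hB : B.IsAlt) {x y : V} (hxy : B x y ≠ 0) :
    LinearIndependent K ![x, y] :=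
  LinearIndependent.pair_iff.mpr fun s t h =>
    hB.eq_zero_of_apply_smul_add_smul_eq_zero hxy (by rw [h, map_zero]) (by rw [h, map_zero])

lemma IsAlt.restrict_span_pair_nondegenerate (hB : B.IsAlt) {x y : V} (hxy : B x y ≠ 0) :
    (B.restrict (span K {x, y})).Nondegenerate := by
  refine B.nondegenerate_restrict_of_disjoint_orthogonal hB.isRefl ?_
  rw [disjoint_iff_inf_le]
  rintro w ⟨hw, hwperp⟩
  obtain ⟨s, t, rfl⟩ := mem_span_pair.mp hw
  obtain ⟨rfl, rfl⟩ := hB.eq_zero_of_apply_smul_add_smul_eq_zero hxy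
    (hwperp x (subset_span (by simp))) (hwperp y (subset_span (by simp)))
  simp

theorem IsAlt.even_finrank [FiniteDimensional K V] (hB : B.IsAlt) (hnd : B.Nondegenerate) :
    Even (finrank K V) := by
  induction h : finrank K V using Nat.strong_induction_on generalizing V with
  | _ n ih =>
  rcases subsingleton_or_nontrivial V with _ | _
  · rw [← h, Module.finrank_zero_of_subsingleton]
    exact ⟨0, rfl⟩
  obtain ⟨x, hx⟩ := exists_ne (0 : V)
  obtain ⟨y, hxy⟩ : ∃ y, B x y ≠ 0 := by
    by_contra! h
    exact hx (hnd.1 x h)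
  have hW : finrank K (span K {x, y}) = 2 := by
    rw [← Matrix.range_cons_cons_empty x y ![],
      finrank_span_eq_card (hB.linearIndependent_pair hxy), Fintype.card_fin]
  have hcompl := B.isCompl_orthogonal_of_restrict_nondegenerate hB.isRefl
    (hB.restrict_span_pair_nondegenerate hxy)
  have hndperp : (B.restrict (B.orthogonal (span K {x, y}))).Nondegenerate := by
    rw [restrict_nondegenerate_iff_isCompl_orthogonal hB.isRefl,
      orthogonal_orthogonal hnd hB.isRefl]
    exact hcompl.symm
  have hdim := finrank_add_eq_of_isCompl hcompl
  obtain ⟨r, hr⟩ := ih _ (by omega) (B := B.restrict _) (fun w => hB w) hndperp rfl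
  exact ⟨r + 1, by omega⟩

theorem IsAlt.exists_natCard_eq_pow_two_mul [Finite K] [Finite V] (hB : B.IsAlt)
    (hnd : B.Nondegenerate) : ∃ r, Nat.card V = Nat.card K ^ (2 * r) := by
  have : Module.Finite K V := Module.Finite.of_finite
  obtain ⟨r, hr⟩ := hB.even_finrank hnd
  exact ⟨r, by rw [Module.natCard_eq_pow_finrank (K := K), hr, two_mul]⟩

end LinearMap.BilinForm

open Subgroup (center mem_top commutator_mem_commutator)
open scoped commutatorElement

section ClassTwo

variable {G M : Type*} [Group G] [CommGroup M]

lemma commutatorElement_mem_commutator (x y : G) : ⁅x, y⁆ ∈ commutator G :=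
  commutator_mem_commutator (mem_top x) (mem_top y)

lemma commutatorElement_mul_left_of_le_center (hG : commutator G ≤ center G) (x y z : G) :
    ⁅x * y, z⁆ = ⁅x, z⁆ * ⁅y, z⁆ := by
  have hyz := Subgroup.mem_center_iff.mp (hG (commutatorElement_mem_commutator y z))
  rw [commutatorElement_mul_left_eq_conj_mul, hyz, mul_inv_cancel_right, hyz]

lemma commutatorElement_mul_right_of_le_center (hG : commutator G ≤ center G) (x y z : G) :
    ⁅x, y * z⁆ = ⁅x, y⁆ * ⁅x, z⁆ := by
  have hxz := Subgroup.mem_center_iff.mp (hG (commutatorElement_mem_commutator x z))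
  rw [commutatorElement_mul_right_eq_mul_conj, mul_assoc _ y, hxz, mul_assoc, mul_inv_cancel_right]

def commutatorHom (hG : commutator G ≤ center G) (x : G) : G →* commutator G where
  toFun y := ⟨⁅x, y⁆, commutatorElement_mem_commutator x y⟩
  map_one' := Subtype.ext (commutatorElement_one_right x)
  map_mul' y z := Subtype.ext (commutatorElement_mul_right_of_le_center hG x y z)

lemma commutatorHom_apply_eq_one_iff (hG : commutator G ≤ center G) {x y : G} :
    commutatorHom hG x y = 1 ↔ Commute x y := by
  rw [← commutatorElement_eq_one_iff_commute, Subtype.ext_iff]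
  rfl

lemma commutatorHom_mul (hG : commutator G ≤ center G) (x y z : G) :
    commutatorHom hG (x * y) z = commutatorHom hG x z * commutatorHom hG y z :=
  Subtype.ext (commutatorElement_mul_left_of_le_center hG x y z)

def commutatorPairing (hG : commutator G ≤ center G) (χ : commutator G →* M) :
    G ⧸ center G →* G ⧸ center G →* M :=
  QuotientGroup.lift _
    { toFun x := QuotientGroup.lift _ (χ.comp (commutatorHom hG x)) fun z hz => by
        simp [(commutatorHom_apply_eq_one_iff hG).mpr (Subgroup.mem_center_iff.mp hz x)]
      map_one' := by ext; simp [(commutatorHom_apply_eq_one_iff hG).mpr (Commute.one_left _)]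
      map_mul' x y := by ext; simp [commutatorHom_mul] }
    fun z hz => by
      ext y
      simp [(commutatorHom_apply_eq_one_iff hG).mpr (Subgroup.mem_center_iff.mp hz y).symm]

lemma commutatorPairing_mk_mk (hG : commutator G ≤ center G) (χ : commutator G →* M)
    (x y : G) : commutatorPairing hG χ x y = χ (commutatorHom hG x y) :=
  rfl

lemma commutatorPairing_self (hG : commutator G ≤ center G) (χ : commutator G →* M)
    (v : G ⧸ center G) : commutatorPairing hG χ v v = 1 := by
  induction v using QuotientGroup.induction_on with | H x =>
  rw [commutatorPairing_mk_mk, (commutatorHom_apply_eq_one_iff hG).mpr (Commute.refl x), map_one]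

lemma commutatorPairing_injective (hG : commutator G ≤ center G) {χ : commutator G →* M}
    (hχ : Function.Injective χ) : Function.Injective (commutatorPairing hG χ) := by
  refine (injective_iff_map_eq_one _).mpr fun v hv => ?_
  induction v using QuotientGroup.induction_on with | H x =>
  refine (QuotientGroup.eq_one_iff x).mpr (Subgroup.mem_center_iff.mpr fun y => ?_)
  have hxy : χ (commutatorHom hG x y) = 1 := DFunLike.congr_fun hv (y : G ⧸ center G)
  exact ((commutatorHom_apply_eq_one_iff hG).mp ((map_eq_one_iff χ hχ).mp hxy)).symm

end ClassTwo

theorem exists_natCard_eq_pow_two_mul_of_injective_pairing {V : Type*} [Group V] [Finite V]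
    {p : ℕ} [Fact p.Prime] (hV : ∀ v : V, v ^ p = 1) (f : V →* V →* Multiplicative (ZMod p))
    (hf_self : ∀ v, f v v = 1) (hf : Function.Injective f) : ∃ r, Nat.card V = p ^ (2 * r) := by
  have hV_comm (a b : V) : a * b = b * a := hf (by rw [map_mul, map_mul, mul_comm])
  let _ : CommGroup V := { mul_comm := hV_comm }
  let _ : Module (ZMod p) (Additive V) := AddCommGroup.zmodModule fun v => hV v.toMul
  let f' : Additive V →+ Additive V →+ ZMod p :=
    MonoidHom.toAdditiveLeft (MonoidHom.toAdditiveLeftMulEquiv.toMonoidHom.comp f)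
  let B : LinearMap.BilinForm (ZMod p) (Additive V) :=
    ((AddMonoidHom.toZModLinearMapEquiv p).toAddMonoidHom.comp f').toZModLinearMap p
  have hB_alt : B.IsAlt := fun a => congrArg Multiplicative.toAdd (hf_self a.toMul)
  have hB_nd : B.Nondegenerate := by
    refine (LinearMap.IsRefl.nondegenerate_iff_separatingLeft hB_alt.isRefl).mpr fun a ha => ?_
    have : f a.toMul = 1 := MonoidHom.ext fun w => congrArg Multiplicative.ofAdd (ha (.ofMul w))
    exact congrArg Additive.ofMul ((injective_iff_map_eq_one f).mp hf _ this)
  rw [Nat.card_congr (Additive.ofMul : V ≃ _), ← Nat.card_zmod p]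
  exact hB_alt.exists_natCard_eq_pow_two_mul hB_nd

/-- Let `p` be a prime and `G` a group such that the commutator
subgroup `G'` has order `p`, the subgroup `G'·G^(p)` lies in the centre of
`G`, and the centre has finite index. Then `[G : Z(G)] = p ^ (2r)` for some
natural number `r ≥ 1`. -/
theorem stmt_12 {G : Type*} [Group G] (p : ℕ) (hp : p.Prime)
    (hcard : Nat.card (commutator G) = p)
    (hle : Subgroup.closure ((commutator G : Set G) ∪ {g : G | ∃ x : G, g = x ^ p}) ≤
      Subgroup.center G)
    (hfin : (Subgroup.center G).index ≠ 0) :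
    ∃ r : ℕ, 1 ≤ r ∧ (Subgroup.center G).index = p ^ (2 * r) := by
  have : Fact p.Prime := ⟨hp⟩
  have : (center G).FiniteIndex := ⟨hfin⟩
  have hG : commutator G ≤ center G := fun g hg => hle (Subgroup.subset_closure (Or.inl hg))
  have hexp (v : G ⧸ center G) : v ^ p = 1 := by
    induction v using QuotientGroup.induction_on with | H x =>
    rw [← QuotientGroup.mk_pow, QuotientGroup.eq_one_iff]
    exact hle (Subgroup.subset_closure (Or.inr ⟨x, rfl⟩))
  let χ : commutator G ≃* Multiplicative (ZMod p) := mulEquivOfPrimeCardEq hcard (by simp)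
  obtain ⟨r, hr⟩ := exists_natCard_eq_pow_two_mul_of_injective_pairing hexp
    (commutatorPairing hG χ.toMonoidHom) (commutatorPairing_self hG _)
    (commutatorPairing_injective hG χ.injective)
  rw [← Subgroup.index_eq_card] at hr
  refine ⟨r, Nat.one_le_iff_ne_zero.mpr ?_, hr⟩
  rintro rfl
  have hZ : center G = ⊤ := Subgroup.index_eq_one.mp (by simpa using hr)
  rw [← commutator_eq_bot_iff_center_eq_top] at hZ
  rw [hZ, Subgroup.card_bot] at hcard
  exact hp.one_lt.ne hcard
end

section
/- Let G be a group whose commutator subgroup G' has order 2, with x² ∈ G' for every x ∈ G, let K := {x ∈ Z(G) : x² = e}, and suppose K ≠ Z(G). Then the assignment T ↦ T·Z(G) is a bijection from the set of subgroups T of G with K ≤ T and t² = e for all t ∈ T, onto the set of commutative subgroups C of G with Z(G) ≤ C; its inverse is given by C ↦ {x ∈ C : x² = e}. -/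
/-!
An elementary abelian 2-subgroup `T` is commutative, hence so is `T·Z(G)`, and an involution
`t z` of `T·Z(G)` has `z² = e` (as `t² = e`), so `z ∈ K ≤ T`; thus `T` is recovered as the
involutions of `T·Z(G)`. Conversely, let `C ⊇ Z(G)` be commutative. Since `|G'| = 2` and every
square lies in `G'`, all squares different from `e` are equal; pick `c ∈ Z(G) \ K`. Each
`x ∈ C` with `x² ≠ e` then satisfies `(x c⁻¹)² = x² c⁻² = e`, so `C` is generated by its
involutions together with `Z(G)`.
-/

/-- The subgroup `K = {x ∈ Z(G) : x² = e}` of a group `G`. -/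
def centralInvolutions (G : Type*) [Group G] : Subgroup G where
  carrier := {x | x ∈ Subgroup.center G ∧ x ^ 2 = 1}
  one_mem' := ⟨Subgroup.one_mem _, one_pow 2⟩
  mul_mem' := by
    intro a b ha hb
    refine ⟨mul_mem ha.1 hb.1, ?_⟩
    have hc : Commute a b := (Subgroup.mem_center_iff.mp hb.1 a)
    rw [hc.mul_pow, ha.2, hb.2, one_mul]
  inv_mem' := by
    intro a ha
    exact ⟨inv_mem ha.1, by rw [inv_pow, ha.2, inv_one]⟩

namespace Subgroup

variable {G : Type*} [Group G]

def involutionsOf (C : Subgroup G) (hC : ∀ x ∈ C, ∀ y ∈ C, x * y = y * x) : Subgroup G where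
  carrier := {x | x ∈ C ∧ x ^ 2 = 1}
  one_mem' := ⟨C.one_mem, one_pow 2⟩
  mul_mem' {a b} ha hb := ⟨C.mul_mem ha.1 hb.1, by
    rw [(show Commute a b from hC a ha.1 b hb.1).mul_pow, ha.2, hb.2, one_mul]⟩
  inv_mem' {a} ha := ⟨C.inv_mem ha.1, by rw [inv_pow, ha.2, inv_one]⟩

theorem mul_comm_of_forall_sq_eq_one {T : Subgroup G} (hT : ∀ t ∈ T, t ^ 2 = 1) :
    ∀ x ∈ T, ∀ y ∈ T, x * y = y * x := fun x hx y hy =>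
  congrArg Subtype.val <| (Commute.of_orderOf_dvd_two
    (fun g : T => orderOf_dvd_of_pow_eq_one (Subtype.ext (hT g g.2))) ⟨x, hx⟩ ⟨y, hy⟩).eq

theorem mul_comm_of_mem_sup_center {T : Subgroup G} (hT : ∀ x ∈ T, ∀ y ∈ T, x * y = y * x) :
    ∀ x ∈ T ⊔ center G, ∀ y ∈ T ⊔ center G, x * y = y * x := by
  intro x hx y hy
  obtain ⟨t, ht, z, hz, rfl⟩ := mem_sup_of_normal_right.mp hx
  obtain ⟨s, hs, w, hw, rfl⟩ := mem_sup_of_normal_right.mp hy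
  have hts : Commute t (s * w) :=
    (show Commute t s from hT t ht s hs).mul_right (mem_center_iff.mp hw t)
  have hzs : Commute z (s * w) := (mem_center_iff.mp hz (s * w)).symm
  exact (hts.mul_left hzs).eq

theorem mem_of_mem_sup_center {T : Subgroup G} (hKT : centralInvolutions G ≤ T)
    (hT : ∀ t ∈ T, t ^ 2 = 1) {x : G} (hx : x ∈ T ⊔ center G) (hx2 : x ^ 2 = 1) : x ∈ T := by
  obtain ⟨t, ht, z, hz, rfl⟩ := mem_sup_of_normal_right.mp hx
  have hz2 : z ^ 2 = 1 := by
    rwa [(show Commute t z from mem_center_iff.mp hz t).mul_pow, hT t ht, one_mul] at hx2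
  exact T.mul_mem ht (hKT ⟨hz, hz2⟩)

theorem coe_eq_setOf_mem_sup_center_sq_eq_one {T : Subgroup G}
    (hKT : centralInvolutions G ≤ T) (hT : ∀ t ∈ T, t ^ 2 = 1) :
    (T : Set G) = {x | x ∈ T ⊔ center G ∧ x ^ 2 = 1} :=
  Set.ext fun _ => ⟨fun hx => ⟨mem_sup_left hx, hT _ hx⟩,
    fun ⟨hx, hx2⟩ => mem_of_mem_sup_center hKT hT hx hx2⟩

theorem eq_of_ne_one_of_card_eq_two {H : Subgroup G} (hH : Nat.card H = 2) {a b : G}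
    (ha : a ∈ H) (hb : b ∈ H) (ha1 : a ≠ 1) (hb1 : b ≠ 1) : a = b := by
  obtain ⟨u, -, hu⟩ := (Nat.card_eq_two_iff' (1 : H)).mp hH
  have hau : (⟨a, ha⟩ : H) = u := hu _ fun h => ha1 (congrArg Subtype.val h)
  have hbu : (⟨b, hb⟩ : H) = u := hu _ fun h => hb1 (congrArg Subtype.val h)
  exact congrArg Subtype.val (hau.trans hbu.symm)

theorem involutionsOf_sup_center {C : Subgroup G} (hZC : center G ≤ C)
    (hC : ∀ x ∈ C, ∀ y ∈ C, x * y = y * x) {c : G} (hc : c ∈ center G)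
    (hsq : ∀ x ∈ C, x ^ 2 ≠ 1 → x ^ 2 = c ^ 2) :
    involutionsOf C hC ⊔ center G = C := by
  refine le_antisymm (sup_le (fun x hx => hx.1) hZC) fun x hx => ?_
  by_cases hx2 : x ^ 2 = 1
  · exact mem_sup_left ⟨hx, hx2⟩
  · have hxc : (x * c⁻¹) ^ 2 = 1 := by
      rw [(show Commute x c⁻¹ from mem_center_iff.mp (inv_mem hc) x).mul_pow, inv_pow,
        hsq x hx hx2, mul_inv_cancel]
    have hxc_mem : x * c⁻¹ ∈ involutionsOf C hC := ⟨C.mul_mem hx (C.inv_mem (hZC hc)), hxc⟩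
    simpa using mul_mem_sup hxc_mem hc

end Subgroup

/-- Let `G` be a group whose commutator subgroup has order `2`,
with `x² ∈ G'` for every `x ∈ G`, let `K = {x ∈ Z(G) : x² = e}`, and suppose
`K ≠ Z(G)`. Then `T ↦ T·Z(G)` is a bijection from the set of subgroups `T` of
`G` of exponent dividing `2` containing `K` onto the set of commutative
subgroups `C` of `G` containing `Z(G)`, with inverse `C ↦ {x ∈ C : x² = e}`. -/
theorem stmt_14 {G : Type*} [Group G] (hcard : Nat.card (commutator G) = 2)
    (hsq : ∀ x : G, x ^ 2 ∈ commutator G)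
    (hne : centralInvolutions G ≠ Subgroup.center G) :
    (∀ T : Subgroup G, centralInvolutions G ≤ T → (∀ t ∈ T, t ^ 2 = 1) →
      Subgroup.center G ≤ T ⊔ Subgroup.center G ∧
      ∀ x ∈ T ⊔ Subgroup.center G, ∀ y ∈ T ⊔ Subgroup.center G, x * y = y * x) ∧
    (∀ C : Subgroup G, Subgroup.center G ≤ C → (∀ x ∈ C, ∀ y ∈ C, x * y = y * x) →
      ∃! T : Subgroup G,
        (centralInvolutions G ≤ T ∧ ∀ t ∈ T, t ^ 2 = 1) ∧ T ⊔ Subgroup.center G = C) ∧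
    (∀ T : Subgroup G, centralInvolutions G ≤ T → (∀ t ∈ T, t ^ 2 = 1) →
      (T : Set G) = {x | x ∈ T ⊔ Subgroup.center G ∧ x ^ 2 = 1}) := by
  obtain ⟨c, hcZ, hcK⟩ := SetLike.exists_of_lt (lt_of_le_of_ne (fun _ hx => hx.1) hne)
  have hc2 : c ^ 2 ≠ 1 := fun h => hcK ⟨hcZ, h⟩
  have hsq_eq : ∀ x : G, x ^ 2 ≠ 1 → x ^ 2 = c ^ 2 := fun x hx2 =>
    Subgroup.eq_of_ne_one_of_card_eq_two hcard (hsq x) (hsq c) hx2 hc2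
  refine ⟨fun T _ hT => ⟨le_sup_right, ?_⟩, fun C hZC hC => ⟨Subgroup.involutionsOf C hC, ?_, ?_⟩,
    fun T hKT hT => Subgroup.coe_eq_setOf_mem_sup_center_sq_eq_one hKT hT⟩
  · exact Subgroup.mul_comm_of_mem_sup_center (Subgroup.mul_comm_of_forall_sq_eq_one hT)
  · exact ⟨⟨fun x hx => ⟨hZC hx.1, hx.2⟩, fun t ht => ht.2⟩,
      Subgroup.involutionsOf_sup_center hZC hC hcZ fun x _ => hsq_eq x⟩
  · rintro T ⟨⟨hKT, hT⟩, rfl⟩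
    exact SetLike.coe_injective (Subgroup.coe_eq_setOf_mem_sup_center_sq_eq_one hKT hT)
end
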